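/- For every integer n ≥ 404, y(n) = 2^{2n − 2z(n) − m(n) + 2} − n^{m(n)−1} > 0. -/

import Mathlib

/-!
Let `R = ⌈log₂ n⌉`, so `n ^ (m - 1) ≤ 2 ^ (R (m - 1))`, and with `3z < 2n` it suffices that
`3 (R + 1) m ≤ 2n + 3R + 5`. Since `m = ⌊√(2n)⌋`, this follows from `m ≥ 3 (R + 1)`, which holds as soon as
`9 (R + 1)² ≤ 2 ^ R < 2n`, i.e. for `R ≥ 11`; for `n ≥ 404` only `R = 9, 10` remain, and there `m ≤ 45`
leaves finitely many cases.
-/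

lemma nine_mul_succ_sq_le_two_pow {R : ℕ} (hR : 11 ≤ R) : 9 * (R + 1) ^ 2 ≤ 2 ^ R := by
  induction R, hR using Nat.le_induction with
  | base => norm_num
  | succ R hR ih => rw [pow_succ 2 R]; nlinarith

lemma three_mul_succ_mul_le {n M R : ℕ} (hn : 404 ≤ n) (hM : M ^ 2 ≤ 2 * n)
    (hM' : 2 * n < (M + 1) ^ 2) (hRn : 2 ^ (R - 1) < n) (hnR : n ≤ 2 ^ R) :
    3 * (R + 1) * M ≤ 2 * n + 3 * R + 5 := by
  have h2R : 2 ^ R < 2 * n := by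
    rcases R with _ | R
    · omega
    · rw [Nat.add_sub_cancel] at hRn; rw [pow_succ]; omega
  by_cases hR : 11 ≤ R
  · have hR2 := nine_mul_succ_sq_le_two_pow hR
    have hRM : 3 * (R + 1) ≤ M := by nlinarith
    nlinarith
  · have h9 : 9 ≤ R := by
      by_contra h
      have : 2 ^ R ≤ 2 ^ 8 := Nat.pow_le_pow_right (by norm_num) (by omega)
      omega
    have hM28 : 28 ≤ M := by nlinarith
    have hn1024 : n ≤ 2 ^ 10 :=
      hnR.trans (Nat.pow_le_pow_right (by norm_num) (by omega))
    have hM45 : M ≤ 45 := by nlinarith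
    interval_cases R <;> interval_cases M <;> omega

lemma natCast_zpow_lt_two_zpow {n M : ℕ} {z : ℤ} (hn : 404 ≤ n) (hz : 3 * z < 2 * n)
    (hM : M ^ 2 ≤ 2 * n) (hM' : 2 * n < (M + 1) ^ 2) :
    (n : ℚ) ^ ((M : ℤ) - 1) < 2 ^ (2 * (n : ℤ) - 2 * z + 2 - M) := by
  set R := Nat.clog 2 n
  have hnR : n ≤ 2 ^ R := Nat.le_pow_clog one_lt_two n
  have hRn : 2 ^ (R - 1) < n := Nat.pow_pred_clog_lt_self one_lt_two (by omega)
  have hM1 : 1 ≤ M := by nlinarith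
  have key : (3 * (R + 1) * M : ℤ) ≤ 2 * n + 3 * R + 5 := by
    exact_mod_cast three_mul_succ_mul_le hn hM hM' hRn hnR
  calc (n : ℚ) ^ ((M : ℤ) - 1) = (n : ℚ) ^ (M - 1) := by
        rw [← zpow_natCast, Nat.cast_sub hM1, Nat.cast_one]
    _ ≤ ((2 : ℚ) ^ R) ^ (M - 1) := by gcongr; exact_mod_cast hnR
    _ = 2 ^ ((R * (M - 1) : ℕ) : ℤ) := by rw [zpow_natCast, pow_mul]
    _ < 2 ^ (2 * (n : ℤ) - 2 * z + 2 - M) := by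
        gcongr
        · norm_num
        · push_cast [Nat.cast_sub hM1]; linarith

theorem stmt_general
    (z : ℕ → ℤ) (m : ℕ → ℕ) (c : ℕ → ℤ) (y : ℕ → ℚ)
    (hz : ∀ n : ℕ, 1 ≤ n → 3 * z n < 2 * (n : ℤ) ∧ ∀ w : ℤ, 3 * w < 2 * (n : ℤ) → w ≤ z n)
    (hm : ∀ n : ℕ, 1 ≤ n → (m n : ℤ) ^ 2 ≤ 2 * (n : ℤ) ∧ ∀ w : ℕ, (w : ℤ) ^ 2 ≤ 2 * (n : ℤ) → w ≤ m n)
    (hc : ∀ n : ℕ, c n = 2 * (n : ℤ) - 2 * z n + 2)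
    (hy : ∀ n : ℕ, y n = (2 : ℚ) ^ (c n - (m n : ℤ)) - (n : ℚ) ^ ((m n : ℤ) - 1)) :
    ∀ n : ℕ, 404 ≤ n → y n > 0 := by
  intro n hn
  obtain ⟨hmn, hm_max⟩ := hm n (by omega)
  have hm_succ : 2 * n < (m n + 1) ^ 2 := by
    by_contra! h
    have := hm_max (m n + 1) (by exact_mod_cast h)
    omega
  rw [hy, hc, gt_iff_lt, sub_pos]
  exact natCast_zpow_lt_two_zpow hn (hz n (by omega)).1 (by exact_mod_cast hmn) hm_succ

theorem stmt
    (z : ℕ → ℤ) (m r : ℕ → ℕ) (c x : ℕ → ℤ) (y : ℕ → ℚ)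
    (hz : ∀ n : ℕ, 1 ≤ n → 3 * z n < 2 * (n : ℤ) ∧ ∀ w : ℤ, 3 * w < 2 * (n : ℤ) → w ≤ z n)
    (hm : ∀ n : ℕ, 1 ≤ n → (m n : ℤ) ^ 2 ≤ 2 * (n : ℤ) ∧ ∀ w : ℕ, (w : ℤ) ^ 2 ≤ 2 * (n : ℤ) → w ≤ m n)
    (hr : ∀ n : ℕ, 1 ≤ n → n ≤ 2 ^ r n ∧ ∀ s : ℕ, n ≤ 2 ^ s → r n ≤ s)
    (hc : ∀ n : ℕ, c n = 2 * (n : ℤ) - 2 * z n + 2)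
    (hx : ∀ n : ℕ, x n = z n - ((r n : ℤ) + 1) * (m n : ℤ))
    (hy : ∀ n : ℕ, y n = (2 : ℚ) ^ (c n - (m n : ℤ)) - (n : ℚ) ^ ((m n : ℤ) - 1)) :
    ∀ n : ℕ, 404 ≤ n → y n > 0 :=
  stmt_general z m c y hz hm hc hy
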